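/- arXiv:2111.09382 — 2 statements merged into one kernel-verified Lean document; each statement's English description precedes it below -/
import Mathlib

section
/- Let D ⊂ ℝⁿ be compact with 0 ∈ D, let V₁, V₂ : ℝⁿ → ℝ be continuously differentiable, and let γ₁ < γ₂, γ₃ > 0 and η, ε, a > 0 be such that: (i) B_ε({y ∈ D : V₁(y) ≤ γ₁}) ⊂ B_η(0); (ii) {y ∈ D : V₁(y) ≤ γ₂} is contained in the interior of D; (iii) ∇V₁(x)ᵀ f(x) < −a < 0 for all x ∈ D with V₁(x) > γ₁; (iv) V₂(0) = 0 and V₂(x) > 0 for all x ∈ D \ {0}; (v) ∇V₂(x)ᵀ f(x) ≤ 0 for all x ∈ D; (vi) the only point x for which φ(x,t) ∈ {y ∈ D : ∇V₂(y)ᵀ f(y) = 0} for all t ≥ 0 is x = 0; (vii) B_η(0) ⊆ {y ∈ D : V₂(y) ≤ γ₃} and {y ∈ D : V₂(y) ≤ γ₃} is contained in the interior of D. Then {y ∈ D : V₁(y) ≤ γ₂} ∪ {y ∈ D : V₂(y) ≤ γ₃} ⊆ ROA_f. -/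
open Filter Metric Set
open scoped Topology

/-- The derivative of `V` along the vector field `f` at `x`, i.e. `∇V(x)ᵀ f(x)`. -/
noncomputable def lieDeriv {n : ℕ} (V : EuclideanSpace ℝ (Fin n) → ℝ)
    (f : EuclideanSpace ℝ (Fin n) → EuclideanSpace ℝ (Fin n))
    (x : EuclideanSpace ℝ (Fin n)) : ℝ :=
  inner ℝ (gradient V x) (f x)

/-!
A trajectory cannot leave `D` through a sublevel set `{y ∈ D | V y ≤ γ} ⊆ interior D` of a
function that does not increase along it. Hence a trajectory starting in `{V₁ ≤ γ₂}` stays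
there, and since `V₁` decreases at rate `a` above `γ₁`, it reaches `{V₁ ≤ γ₁} ⊆ B_η(0)` in
finite time, thus enters `{V₂ ≤ γ₃}`. That set is compact and forward invariant, so LaSalle's
invariance principle applies: `V₂` is constant on the (forward invariant) ω-limit set, whose
orbits therefore lie in `{∇V₂ᵀ f = 0}`, and by (vi) the ω-limit set is `{0}`.
-/

theorem antitoneOn_of_hasDerivWithinAt_Ici_nonpos {g g' : ℝ → ℝ}
    (hg : ∀ t, 0 ≤ t → HasDerivWithinAt g (g' t) (Ici 0) t) {I : Set ℝ} (hI : Convex ℝ I)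
    (hI₀ : I ⊆ Ici 0) (hg' : ∀ t ∈ interior I, g' t ≤ 0) : AntitoneOn g I := by
  refine antitoneOn_of_hasDerivWithinAt_nonpos hI
    (fun t ht => ((hg t (hI₀ ht)).continuousWithinAt).mono hI₀) (fun t ht => ?_) hg'
  exact (hg t (hI₀ (interior_subset ht))).mono (interior_subset.trans hI₀)

section Curve

variable {X : Type*} [TopologicalSpace X] {c : ℝ → X} {V : X → ℝ} {g' : ℝ → ℝ} {D : Set X}

theorem mem_sublevel_of_deriv_nonpos (hc : ContinuousOn c (Ici 0)) (hV : Continuous V)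
    (hD : IsClosed D) (hderiv : ∀ t, 0 ≤ t → HasDerivWithinAt (V ∘ c) (g' t) (Ici 0) t)
    (hdec : ∀ t, 0 ≤ t → c t ∈ D → g' t ≤ 0) {γ : ℝ} (hsub : {y ∈ D | V y ≤ γ} ⊆ interior D)
    (h₀ : c 0 ∈ {y ∈ D | V y ≤ γ}) : ∀ t, 0 ≤ t → c t ∈ {y ∈ D | V y ≤ γ} := by
  have hK : IsClosed {y ∈ D | V y ≤ γ} := hD.inter (isClosed_le hV continuous_const)
  intro T hT
  refine IsClosed.Icc_subset_of_forall_mem_nhdsWithin (a := 0) (s := c ⁻¹' {y ∈ D | V y ≤ γ})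
    ?_ h₀ (fun t ⟨ht, ht₀, _⟩ => ?_) ⟨hT, le_rfl⟩
  · rw [inter_comm]
    exact (hc.mono Icc_subset_Ici_self).preimage_isClosed_of_isClosed isClosed_Icc hK
  · have hnhds : c ⁻¹' interior D ∈ 𝓝[>] t :=
      nhdsWithin_mono _ (Ioi_subset_Ici ht₀) (hc t ht₀ (isOpen_interior.mem_nhds (hsub ht)))
    obtain ⟨u, hu, hIoo⟩ := mem_nhdsGT_iff_exists_Ioo_subset.1 hnhds
    refine mem_of_superset (Ioo_mem_nhdsGT hu) fun s hs => ⟨interior_subset (hIoo hs), ?_⟩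
    have hanti : AntitoneOn (V ∘ c) (Icc t s) := by
      refine antitoneOn_of_hasDerivWithinAt_Ici_nonpos hderiv (convex_Icc t s)
        (Icc_subset_Ici_self.trans (Ici_subset_Ici.2 ht₀)) fun r hr => ?_
      rw [interior_Icc] at hr
      exact hdec r (ht₀.trans hr.1.le)
        (interior_subset (hIoo ⟨hr.1, hr.2.trans hs.2⟩))
    exact (hanti ⟨le_rfl, hs.1.le⟩ ⟨hs.1.le, le_rfl⟩ hs.1.le).trans ht.2

theorem exists_mem_sublevel_of_deriv_le_neg (hc : ContinuousOn c (Ici 0)) (hV : Continuous V)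
    (hD : IsClosed D) (hderiv : ∀ t, 0 ≤ t → HasDerivWithinAt (V ∘ c) (g' t) (Ici 0) t)
    {γ₁ γ₂ a : ℝ} (ha : 0 < a) (hdec : ∀ t, 0 ≤ t → c t ∈ D → γ₁ < V (c t) → g' t ≤ -a)
    (hsub : {y ∈ D | V y ≤ γ₂} ⊆ interior D) (h₀ : c 0 ∈ {y ∈ D | V y ≤ γ₂}) :
    ∃ t, 0 ≤ t ∧ c t ∈ {y ∈ D | V y ≤ γ₁} := by
  by_contra! hnever
  have habove : ∀ t, 0 ≤ t → c t ∈ D → γ₁ < V (c t) := fun t ht hct =>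
    not_le.1 fun h => hnever t ht ⟨hct, h⟩
  have hstay := mem_sublevel_of_deriv_nonpos hc hV hD hderiv
    (fun t ht hct => (hdec t ht hct (habove t ht hct)).trans (neg_nonpos.2 ha.le)) hsub h₀
  have hanti : AntitoneOn (fun t => V (c t) + a * t) (Ici 0) := by
    refine antitoneOn_of_hasDerivWithinAt_Ici_nonpos (g' := fun t => g' t + a)
      (fun t ht => by
        have h := (hderiv t ht).add ((hasDerivWithinAt_id t (Ici 0)).const_mul a)
        simp only [mul_one] at h
        exact h)
      (convex_Ici 0) subset_rfl fun t ht => ?_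
    rw [interior_Ici] at ht
    linarith [hdec t ht.le (hstay t ht.le).1 (habove t ht.le (hstay t ht.le).1)]
  have hγ : γ₁ < γ₂ := (habove 0 le_rfl h₀.1).trans_le h₀.2
  -- `V ∘ c` decreases at rate at least `a`, so it would fall below `γ₁` by time `T`
  set T := (γ₂ - γ₁) / a
  have hT : 0 ≤ T := div_nonneg (sub_nonneg.2 hγ.le) ha.le
  have hdrop := hanti (mem_Ici.2 le_rfl) hT hT
  have haT : a * T = γ₂ - γ₁ := mul_div_cancel₀ _ ha.ne'
  simp only [mul_zero, add_zero] at hdrop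
  linarith [h₀.2, habove T hT (hstay T hT).1]

end Curve

theorem tendsto_of_tendsto_flow_shift {X : Type*} {φ : X → ℝ → X}
    (hsemi : ∀ x t s, 0 ≤ t → 0 ≤ s → φ (φ x t) s = φ x (t + s)) {x : X} {t₀ : ℝ}
    (ht₀ : 0 ≤ t₀) {l : Filter X} (h : Tendsto (φ (φ x t₀)) atTop l) :
    Tendsto (φ x) atTop l := by
  refine (h.comp (tendsto_atTop_add_const_right atTop (-t₀) tendsto_id)).congr' ?_
  filter_upwards [eventually_ge_atTop t₀] with t ht
  rw [Function.comp_apply, id, hsemi x t₀ _ ht₀ (by linarith), add_neg_cancel_comm_assoc]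

section Semiflow

variable {X : Type*} [TopologicalSpace X] {φ : X → ℝ → X}

theorem MapClusterPt.flow_apply (hcont : ∀ s, 0 ≤ s → Continuous (φ · s))
    (hsemi : ∀ x t s, 0 ≤ t → 0 ≤ s → φ (φ x t) s = φ x (t + s)) {x p : X}
    (hp : MapClusterPt p atTop (φ x)) {s : ℝ} (hs : 0 ≤ s) :
    MapClusterPt (φ p s) atTop (φ x) := by
  have hshift : MapClusterPt (φ p s) atTop (φ x ∘ (· + s)) := by
    refine (hp.continuousAt_comp (hcont s hs).continuousAt).congrFun ?_
    filter_upwards [eventually_ge_atTop 0] with t ht using hsemi x t s ht hs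
  exact hshift.of_comp (tendsto_atTop_add_const_right atTop s tendsto_id)

theorem MapClusterPt.eq_of_antitoneOn {g : ℝ → X} {V : X → ℝ} (hV : Continuous V)
    (hanti : AntitoneOn (V ∘ g) (Ici 0)) {p q : X} (hp : MapClusterPt p atTop g)
    (hq : MapClusterPt q atTop g) : V p = V q := by
  have hle_traj : ∀ {p}, MapClusterPt p atTop g → ∀ t, 0 ≤ t → V p ≤ V (g t) :=
    fun hp t ht => (isClosed_le hV continuous_const).mem_of_mapClusterPt hp <| by
      filter_upwards [eventually_ge_atTop t] with τ hτ using hanti ht (ht.trans hτ) hτ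
  have hle : ∀ {p q}, MapClusterPt p atTop g → MapClusterPt q atTop g → V p ≤ V q :=
    fun hp hq => (isClosed_le continuous_const hV).mem_of_mapClusterPt hq <| by
      filter_upwards [eventually_ge_atTop 0] with τ hτ using hle_traj hp τ hτ
  exact le_antisymm (hle hp hq) (hle hq hp)

theorem tendsto_flow_of_laSalle [T2Space X] (hcont : ∀ s, 0 ≤ s → Continuous (φ · s))
    (hsemi : ∀ x t s, 0 ≤ t → 0 ≤ s → φ (φ x t) s = φ x (t + s)) {V : X → ℝ}
    (hV : Continuous V) {K : Set X} (hK : IsCompact K) {x x₀ : X}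
    (hxK : ∀ t, 0 ≤ t → φ x t ∈ K) (hanti : AntitoneOn (V ∘ φ x) (Ici 0))
    (hunique : ∀ p, (∀ s, 0 ≤ s → φ p s ∈ K ∧ V (φ p s) = V p) → p = x₀) :
    Tendsto (φ x) atTop (𝓝 x₀) := by
  have hev : ∀ᶠ t in atTop, φ x t ∈ K := (eventually_ge_atTop 0).mono hxK
  refine hK.tendsto_nhds_of_unique_mapClusterPt hev fun p _ hp => hunique p fun s hs => ?_
  have hps := hp.flow_apply hcont hsemi hs
  exact ⟨hK.isClosed.mem_of_mapClusterPt hps hev, hps.eq_of_antitoneOn hV hanti hp⟩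

end Semiflow

section Euclidean

variable {n : ℕ} {f : EuclideanSpace ℝ (Fin n) → EuclideanSpace ℝ (Fin n)}
  {V : EuclideanSpace ℝ (Fin n) → ℝ}

theorem hasDerivWithinAt_comp_lieDeriv {c : ℝ → EuclideanSpace ℝ (Fin n)} {s : Set ℝ} {t : ℝ}
    (hV : DifferentiableAt ℝ V (c t)) (hc : HasDerivWithinAt c (f (c t)) s t) :
    HasDerivWithinAt (V ∘ c) (lieDeriv V f (c t)) s t := by
  simpa [lieDeriv] using hV.hasGradientAt.hasFDerivAt.comp_hasDerivWithinAt t hc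

theorem lieDeriv_eq_zero_of_forall_eq {c : ℝ → EuclideanSpace ℝ (Fin n)} {t C : ℝ}
    (hV : DifferentiableAt ℝ V (c t)) (hc : HasDerivWithinAt c (f (c t)) (Ici 0) t)
    (ht : 0 ≤ t) (hconst : ∀ s, 0 ≤ s → V (c s) = C) : lieDeriv V f (c t) = 0 :=
  (uniqueDiffOn_Ici 0 t ht).eq_deriv _ (hasDerivWithinAt_comp_lieDeriv hV hc)
    ((hasDerivWithinAt_const t _ C).congr hconst (hconst t ht))

theorem tendsto_of_lieDeriv_nonpos {φ : EuclideanSpace ℝ (Fin n) → ℝ → EuclideanSpace ℝ (Fin n)}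
    (hφ0 : ∀ x, φ x 0 = x) (hcont : ∀ s, 0 ≤ s → Continuous (φ · s))
    (hφd : ∀ x t, 0 ≤ t → HasDerivWithinAt (φ x) (f (φ x t)) (Ici 0) t)
    (hsemi : ∀ x t s, 0 ≤ t → 0 ≤ s → φ (φ x t) s = φ x (t + s))
    {D : Set (EuclideanSpace ℝ (Fin n))} (hD : IsCompact D) (hV : ContDiff ℝ 1 V) {γ : ℝ}
    (hsub : {y ∈ D | V y ≤ γ} ⊆ interior D) (hdec : ∀ y ∈ D, lieDeriv V f y ≤ 0)
    {x₀ : EuclideanSpace ℝ (Fin n)}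
    (hE : ∀ p, (∀ t, 0 ≤ t → φ p t ∈ {y ∈ D | lieDeriv V f y = 0}) → p = x₀)
    {x : EuclideanSpace ℝ (Fin n)} (hx : x ∈ {y ∈ D | V y ≤ γ}) :
    Tendsto (φ x) atTop (𝓝 x₀) := by
  have hdiff : Differentiable ℝ V := hV.differentiable one_ne_zero
  have hderiv : ∀ t, 0 ≤ t → HasDerivWithinAt (V ∘ φ x) (lieDeriv V f (φ x t)) (Ici 0) t :=
    fun t ht => hasDerivWithinAt_comp_lieDeriv (hdiff _) (hφd x t ht)
  have hstay := mem_sublevel_of_deriv_nonpos (fun t ht => (hφd x t ht).continuousWithinAt)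
    hV.continuous hD.isClosed hderiv (fun t _ h => hdec _ h) hsub (by rwa [hφ0])
  have hK : IsCompact {y ∈ D | V y ≤ γ} :=
    hD.of_isClosed_subset (hD.isClosed.inter (isClosed_le hV.continuous continuous_const))
      fun y hy => hy.1
  have hanti : AntitoneOn (V ∘ φ x) (Ici 0) :=
    antitoneOn_of_hasDerivWithinAt_Ici_nonpos hderiv (convex_Ici 0) subset_rfl
      fun t ht => hdec _ (hstay t (interior_subset ht)).1
  refine tendsto_flow_of_laSalle hcont hsemi hV.continuous hK hstay hanti fun p hp => hE p ?_
  exact fun t ht => ⟨(hp t ht).1.1,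
    lieDeriv_eq_zero_of_forall_eq (hdiff _) (hφd p t ht) ht fun s hs => (hp s hs).2⟩

end Euclidean

theorem two_step_lyapunov_ROA_general {n : ℕ}
    (f : EuclideanSpace ℝ (Fin n) → EuclideanSpace ℝ (Fin n))
    (φ : EuclideanSpace ℝ (Fin n) → ℝ → EuclideanSpace ℝ (Fin n))
    (hφ0 : ∀ x, φ x 0 = x)
    (hφC : ContDiffOn ℝ 1 (fun p : EuclideanSpace ℝ (Fin n) × ℝ => φ p.1 p.2)
      (Set.univ ×ˢ Set.Ici (0 : ℝ)))
    (hφd : ∀ x t, 0 ≤ t → HasDerivWithinAt (φ x) (f (φ x t)) (Set.Ici 0) t)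
    (hsemi : ∀ x t s, 0 ≤ t → 0 ≤ s → φ (φ x t) s = φ x (t + s))
    (D : Set (EuclideanSpace ℝ (Fin n))) (hD : IsCompact D)
    (V₁ V₂ : EuclideanSpace ℝ (Fin n) → ℝ)
    (hV₁ : ContDiff ℝ 1 V₁) (hV₂ : ContDiff ℝ 1 V₂)
    (γ₁ γ₂ γ₃ η ε a : ℝ)
    (hε : 0 < ε) (ha : 0 < a)
    (hthick : Metric.thickening ε {y ∈ D | V₁ y ≤ γ₁} ⊆
      Metric.ball (0 : EuclideanSpace ℝ (Fin n)) η)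
    (hsub₁ : {y ∈ D | V₁ y ≤ γ₂} ⊆ interior D)
    (hdec₁ : ∀ x ∈ D, γ₁ < V₁ x → lieDeriv V₁ f x < -a)
    (hdec₂ : ∀ x ∈ D, lieDeriv V₂ f x ≤ 0)
    (hE : ∀ x : EuclideanSpace ℝ (Fin n),
      (∀ t, 0 ≤ t → φ x t ∈ {y ∈ D | lieDeriv V₂ f y = 0}) ↔ x = 0)
    (hball : Metric.ball (0 : EuclideanSpace ℝ (Fin n)) η ⊆ {y ∈ D | V₂ y ≤ γ₃})
    (hsub₂ : {y ∈ D | V₂ y ≤ γ₃} ⊆ interior D) :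
    {y ∈ D | V₁ y ≤ γ₂} ∪ {y ∈ D | V₂ y ≤ γ₃} ⊆
      {x | Tendsto (fun t => ‖φ x t‖) atTop (𝓝 0)} := by
  have hcont : ∀ s, 0 ≤ s → Continuous (φ · s) := fun s hs =>
    hφC.continuousOn.comp_continuous (continuous_id.prodMk continuous_const)
      fun y => ⟨mem_univ y, hs⟩
  have hlaSalle : ∀ z ∈ {y ∈ D | V₂ y ≤ γ₃}, Tendsto (φ z) atTop (𝓝 0) := fun z hz =>
    tendsto_of_lieDeriv_nonpos hφ0 hcont hφd hsemi hD hV₂ hsub₂ hdec₂ (fun p => (hE p).1) hz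
  intro x hx
  refine tendsto_zero_iff_norm_tendsto_zero.1 ?_
  rcases hx with hx | hx
  · obtain ⟨t₀, ht₀, hreach⟩ := exists_mem_sublevel_of_deriv_le_neg
      (fun t ht => (hφd x t ht).continuousWithinAt) hV₁.continuous hD.isClosed
      (fun t ht => hasDerivWithinAt_comp_lieDeriv (hV₁.differentiable one_ne_zero _) (hφd x t ht))
      ha (fun t _ h hγ => (hdec₁ _ h hγ).le) hsub₁ (by rwa [hφ0])
    exact tendsto_of_tendsto_flow_shift hsemi ht₀
      (hlaSalle _ (hball (hthick (self_subset_thickening hε _ hreach))))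
  · exact hlaSalle x hx

/-- Combining a "donut" function `V₁` with a Lyapunov function `V₂` yields the inner ROA
approximation `{y ∈ D : V₁(y) ≤ γ₂} ∪ {y ∈ D : V₂(y) ≤ γ₃} ⊆ ROA_f`. -/
theorem two_step_lyapunov_ROA {n : ℕ}
    (f : EuclideanSpace ℝ (Fin n) → EuclideanSpace ℝ (Fin n))
    (hf : ContDiff ℝ 1 f) (hf0 : f 0 = 0)
    (φ : EuclideanSpace ℝ (Fin n) → ℝ → EuclideanSpace ℝ (Fin n))
    (hφ0 : ∀ x, φ x 0 = x)
    (hφC : ContDiffOn ℝ 1 (fun p : EuclideanSpace ℝ (Fin n) × ℝ => φ p.1 p.2)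
      (Set.univ ×ˢ Set.Ici (0 : ℝ)))
    (hφd : ∀ x t, 0 ≤ t → HasDerivWithinAt (φ x) (f (φ x t)) (Set.Ici 0) t)
    (hsemi : ∀ x t s, 0 ≤ t → 0 ≤ s → φ (φ x t) s = φ x (t + s))
    (D : Set (EuclideanSpace ℝ (Fin n))) (hD : IsCompact D)
    (h0D : (0 : EuclideanSpace ℝ (Fin n)) ∈ D)
    (V₁ V₂ : EuclideanSpace ℝ (Fin n) → ℝ)
    (hV₁ : ContDiff ℝ 1 V₁) (hV₂ : ContDiff ℝ 1 V₂)
    (γ₁ γ₂ γ₃ η ε a : ℝ) (hγ : γ₁ < γ₂) (hγ₃ : 0 < γ₃)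
    (hη : 0 < η) (hε : 0 < ε) (ha : 0 < a)
    (hthick : Metric.thickening ε {y ∈ D | V₁ y ≤ γ₁} ⊆
      Metric.ball (0 : EuclideanSpace ℝ (Fin n)) η)
    (hsub₁ : {y ∈ D | V₁ y ≤ γ₂} ⊆ interior D)
    (hdec₁ : ∀ x ∈ D, γ₁ < V₁ x → lieDeriv V₁ f x < -a)
    (hV₂0 : V₂ 0 = 0)
    (hV₂pos : ∀ x ∈ D \ {0}, 0 < V₂ x)
    (hdec₂ : ∀ x ∈ D, lieDeriv V₂ f x ≤ 0)
    (hE : ∀ x : EuclideanSpace ℝ (Fin n),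
      (∀ t, 0 ≤ t → φ x t ∈ {y ∈ D | lieDeriv V₂ f y = 0}) ↔ x = 0)
    (hball : Metric.ball (0 : EuclideanSpace ℝ (Fin n)) η ⊆ {y ∈ D | V₂ y ≤ γ₃})
    (hsub₂ : {y ∈ D | V₂ y ≤ γ₃} ⊆ interior D) :
    {y ∈ D | V₁ y ≤ γ₂} ∪ {y ∈ D | V₂ y ≤ γ₃} ⊆
      {x | Tendsto (fun t => ‖φ x t‖) atTop (𝓝 0)} :=
  two_step_lyapunov_ROA_general f φ hφ0 hφC hφd hsemi D hD V₁ V₂ hV₁ hV₂ γ₁ γ₂ γ₃ η ε a hε ha hthick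
    hsub₁ hdec₁ hdec₂ hE hball hsub₂
end

section
/- Let D ⊂ ℝⁿ be compact with 0 ∈ D, let V₂ : ℝⁿ → ℝ be continuously differentiable with V₂(0) = 0 and V₂(x) > 0 for all x ∈ D \ {0}, and suppose ∇V₂(x)ᵀ f(x) ≤ 0 for all x ∈ D, the only point x for which φ(x,t) ∈ {y ∈ D : ∇V₂(y)ᵀ f(y) = 0} for all t ≥ 0 is x = 0, and γ₃ > 0 is such that {y ∈ D : V₂(y) ≤ γ₃} is contained in the interior of D. Then {y ∈ D : V₂(y) ≤ γ₃} ⊆ ROA_f. -/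
open Filter Metric Set
open scoped Topology

/-! LaSalle's invariance principle. Along a trajectory inside `D` the function `V₂` is
nonincreasing, so a trajectory starting in the sublevel set `{V₂ ≤ γ₃} ∩ D` never leaves it: it
could only do so through the boundary of `D`, which the sublevel set avoids. Hence the trajectory
stays in the compact set `D` and `V₂` converges along it to some `c`. Its ω-limit points are closed
under the flow and carry `V₂ = c`, so the orbit of an ω-limit point stays in `D` with vanishing
Lie derivative; by hypothesis the point is `0`, and compactness gives convergence to `0`. -/

theorem exists_tendsto_atTop_of_antitoneOn_Ici {g : ℝ → ℝ} {a : ℝ} (hg : AntitoneOn g (Ici a))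
    (hbdd : BddBelow (g '' Ici a)) : ∃ c, Tendsto g atTop (𝓝 c) :=
  ⟨_, tendsto_comp_val_Ici_atTop.1 <|
    tendsto_atTop_ciInf (fun s t hst => hg s.2 t.2 hst) (by rwa [← image_eq_range])⟩

theorem MapClusterPt.eq_of_tendsto {X Y α : Type*} [TopologicalSpace X] [TopologicalSpace Y]
    [T2Space Y] {l : Filter α} {u : α → X} {x : X} {g : X → Y} {c : Y}
    (hx : MapClusterPt x l u) (hg : ContinuousAt g x) (hc : Tendsto (g ∘ u) l (𝓝 c)) :
    g x = c := by
  by_contra hne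
  exact ((hx.continuousAt_comp hg).clusterPt.mono hc).ne
    (disjoint_iff.1 (disjoint_nhds_nhds.2 hne))

theorem MapClusterPt.semiflow_apply {X : Type*} [TopologicalSpace X] {φ : X → ℝ → X}
    {x y : X} {s : ℝ}
    (hcont : ContinuousAt (fun z => φ z s) y)
    (hsemi : ∀ t, 0 ≤ t → φ (φ x t) s = φ x (t + s))
    (hy : MapClusterPt y atTop (φ x)) : MapClusterPt (φ y s) atTop (φ x) := by
  have h := hy.continuousAt_comp hcont
  refine MapClusterPt.of_comp (tendsto_atTop_add_const_right _ s tendsto_id) (h.congrFun ?_)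
  filter_upwards [eventually_ge_atTop 0] with t ht using hsemi t ht

section ForwardSolutions

variable {n : ℕ} {f : EuclideanSpace ℝ (Fin n) → EuclideanSpace ℝ (Fin n)}
  {V : EuclideanSpace ℝ (Fin n) → ℝ} {γ : ℝ → EuclideanSpace ℝ (Fin n)}

theorem HasDerivWithinAt.lieDeriv_comp {s : Set ℝ} {t : ℝ} (hV : DifferentiableAt ℝ V (γ t))
    (hγ : HasDerivWithinAt γ (f (γ t)) s t) :
    HasDerivWithinAt (fun u => V (γ u)) (lieDeriv V f (γ t)) s t := by
  refine (hV.hasFDerivAt.comp_hasDerivWithinAt t hγ).congr_deriv ?_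
  rw [lieDeriv, gradient, InnerProductSpace.toDual_symm_apply]

variable (f) in
def IsForwardSolution (γ : ℝ → EuclideanSpace ℝ (Fin n)) : Prop :=
  ∀ t, 0 ≤ t → HasDerivWithinAt γ (f (γ t)) (Ici 0) t

theorem IsForwardSolution.continuousOn (hγ : IsForwardSolution f γ) : ContinuousOn γ (Ici 0) :=
  fun t ht => (hγ t ht).continuousWithinAt

theorem IsForwardSolution.antitoneOn_of_lieDeriv_nonpos (hγ : IsForwardSolution f γ)
    (hV : Differentiable ℝ V) {I : Set ℝ} (hI : Convex ℝ I) (hI0 : I ⊆ Ici 0)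
    (hle : ∀ t ∈ I, lieDeriv V f (γ t) ≤ 0) :
    AntitoneOn (fun t => V (γ t)) I := by
  have hderiv : ∀ t ∈ interior I, HasDerivAt (fun u => V (γ u)) (lieDeriv V f (γ t)) t := by
    intro t ht
    have ht0 : 0 < t := by simpa using interior_mono hI0 ht
    exact ((hγ t ht0.le).lieDeriv_comp (hV _)).hasDerivAt (Ici_mem_nhds ht0)
  refine antitoneOn_of_deriv_nonpos hI (hV.continuous.comp_continuousOn (hγ.continuousOn.mono hI0))
    (fun t ht => (hderiv t ht).differentiableAt.differentiableWithinAt) ?_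
  intro t ht
  rw [(hderiv t ht).deriv]
  exact hle t (interior_subset ht)

theorem IsForwardSolution.lieDeriv_eq_zero_of_const (hγ : IsForwardSolution f γ) {c t : ℝ}
    (hc : ∀ u, 0 ≤ u → V (γ u) = c) (ht : 0 ≤ t) (hV : DifferentiableAt ℝ V (γ t)) :
    lieDeriv V f (γ t) = 0 := by
  have hconst : HasDerivWithinAt (fun u => V (γ u)) 0 (Ici 0) t :=
    (hasDerivWithinAt_const t _ c).congr (fun u hu => hc u hu) (hc t ht)
  exact (uniqueDiffOn_Ici 0 t ht).eq_deriv _ ((hγ t ht).lieDeriv_comp hV) hconst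

theorem IsForwardSolution.mapsTo_sublevel (hγ : IsForwardSolution f γ) (hV : Differentiable ℝ V)
    {D : Set (EuclideanSpace ℝ (Fin n))} (hD : IsClosed D) (hdec : ∀ y ∈ D, lieDeriv V f y ≤ 0)
    {c : ℝ} (hsub : {y ∈ D | V y ≤ c} ⊆ interior D) (h0 : γ 0 ∈ {y ∈ D | V y ≤ c}) :
    MapsTo γ (Ici 0) {y ∈ D | V y ≤ c} := by
  set S := {y ∈ D | V y ≤ c}
  have hS : IsClosed S := hD.inter (isClosed_le hV.continuous continuous_const)
  intro b hb
  suffices Icc 0 b ⊆ γ ⁻¹' S from this ⟨hb, le_rfl⟩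
  refine IsClosed.Icc_subset_of_forall_mem_nhdsWithin ?_ h0 ?_
  · rw [inter_comm]
    exact (hγ.continuousOn.mono Icc_subset_Ici_self).preimage_isClosed_of_isClosed isClosed_Icc hS
  · rintro t ⟨htS, ht0, -⟩
    have hint : ∀ᶠ u in 𝓝[≥] t, γ u ∈ interior D :=
      (hγ.continuousOn t ht0).mono_left (nhdsWithin_mono _ (Ici_subset_Ici.2 ht0))
        (isOpen_interior.mem_nhds (hsub htS))
    obtain ⟨ε, hε, hεD⟩ := mem_nhdsGE_iff_exists_Icc_subset.1 hint
    have hanti := hγ.antitoneOn_of_lieDeriv_nonpos hV (convex_Icc t ε)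
      (Icc_subset_Ici_iff hε.le |>.2 ht0) fun u hu => hdec _ (interior_subset (hεD hu))
    filter_upwards [Ioo_mem_nhdsGT hε] with u hu
    exact ⟨interior_subset (hεD (Ioo_subset_Icc_self hu)),
      (hanti (left_mem_Icc.2 hε.le) (Ioo_subset_Icc_self hu) hu.1.le).trans htS.2⟩

end ForwardSolutions

theorem lyapunov_sublevel_subset_ROA_general {n : ℕ}
    (f : EuclideanSpace ℝ (Fin n) → EuclideanSpace ℝ (Fin n))
    (φ : EuclideanSpace ℝ (Fin n) → ℝ → EuclideanSpace ℝ (Fin n))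
    (hφ0 : ∀ x, φ x 0 = x)
    (hφC : ContDiffOn ℝ 1 (fun p : EuclideanSpace ℝ (Fin n) × ℝ => φ p.1 p.2)
      (Set.univ ×ˢ Set.Ici (0 : ℝ)))
    (hφd : ∀ x t, 0 ≤ t → HasDerivWithinAt (φ x) (f (φ x t)) (Set.Ici 0) t)
    (hsemi : ∀ x t s, 0 ≤ t → 0 ≤ s → φ (φ x t) s = φ x (t + s))
    (D : Set (EuclideanSpace ℝ (Fin n))) (hD : IsCompact D)
    (V₂ : EuclideanSpace ℝ (Fin n) → ℝ)
    (hV₂ : ContDiff ℝ 1 V₂)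
    (hdec₂ : ∀ x ∈ D, lieDeriv V₂ f x ≤ 0)
    (hE : ∀ x : EuclideanSpace ℝ (Fin n),
      (∀ t, 0 ≤ t → φ x t ∈ {y ∈ D | lieDeriv V₂ f y = 0}) ↔ x = 0)
    (γ₃ : ℝ)
    (hsub : {y ∈ D | V₂ y ≤ γ₃} ⊆ interior D) :
    {y ∈ D | V₂ y ≤ γ₃} ⊆ {x | Tendsto (fun t => ‖φ x t‖) atTop (𝓝 0)} := by
  intro x hx
  have hsol : ∀ z, IsForwardSolution f (φ z) := hφd
  have hV : Differentiable ℝ V₂ := hV₂.differentiable one_ne_zero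
  have hφs : ∀ s, 0 ≤ s → Continuous fun z => φ z s := fun s hs =>
    continuousOn_univ.1 <| hφC.continuousOn.comp
      (continuous_id.prodMk continuous_const).continuousOn fun z _ => ⟨mem_univ z, hs⟩
  have hinv := (hsol x).mapsTo_sublevel hV hD.isClosed hdec₂ hsub (by rwa [hφ0])
  have hevD : ∀ᶠ t in atTop, φ x t ∈ D :=
    (eventually_ge_atTop 0).mono fun t ht => (hinv ht).1
  have hanti : AntitoneOn (fun t => V₂ (φ x t)) (Ici 0) :=
    (hsol x).antitoneOn_of_lieDeriv_nonpos hV (convex_Ici 0) subset_rfl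
      fun t ht => hdec₂ _ (hinv ht).1
  have hbdd : BddBelow ((fun t => V₂ (φ x t)) '' Ici 0) :=
    (hD.bddBelow_image hV.continuous.continuousOn).mono
      (image_comp V₂ (φ x) _ ▸ image_mono (hinv.image_subset.trans (sep_subset _ _)))
  obtain ⟨c, hc⟩ := exists_tendsto_atTop_of_antitoneOn_Ici hanti hbdd
  have hω : ∀ y, MapClusterPt y atTop (φ x) → ∀ s, 0 ≤ s → MapClusterPt (φ y s) atTop (φ x) :=
    fun y hy s hs => hy.semiflow_apply (hφs s hs).continuousAt fun t ht => hsemi x t s ht hs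
  refine tendsto_zero_iff_norm_tendsto_zero.1 <|
    hD.tendsto_nhds_of_unique_mapClusterPt hevD fun y _ hy => (hE y).1 fun s hs => ?_
  refine ⟨hD.isClosed.mem_of_mapClusterPt (hω y hy s hs) hevD, ?_⟩
  exact (hsol y).lieDeriv_eq_zero_of_const
    (fun u hu => (hω y hy u hu).eq_of_tendsto hV.continuous.continuousAt hc) hs (hV _)

/-- A sublevel set `{y ∈ D : V₂(y) ≤ γ₃}` of a Lyapunov function `V₂`, contained in the
interior of the compact set `D`, is contained in the region of attraction. -/
theorem lyapunov_sublevel_subset_ROA {n : ℕ}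
    (f : EuclideanSpace ℝ (Fin n) → EuclideanSpace ℝ (Fin n))
    (hf : ContDiff ℝ 1 f) (hf0 : f 0 = 0)
    (φ : EuclideanSpace ℝ (Fin n) → ℝ → EuclideanSpace ℝ (Fin n))
    (hφ0 : ∀ x, φ x 0 = x)
    (hφC : ContDiffOn ℝ 1 (fun p : EuclideanSpace ℝ (Fin n) × ℝ => φ p.1 p.2)
      (Set.univ ×ˢ Set.Ici (0 : ℝ)))
    (hφd : ∀ x t, 0 ≤ t → HasDerivWithinAt (φ x) (f (φ x t)) (Set.Ici 0) t)
    (hsemi : ∀ x t s, 0 ≤ t → 0 ≤ s → φ (φ x t) s = φ x (t + s))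
    (D : Set (EuclideanSpace ℝ (Fin n))) (hD : IsCompact D)
    (h0D : (0 : EuclideanSpace ℝ (Fin n)) ∈ D)
    (V₂ : EuclideanSpace ℝ (Fin n) → ℝ)
    (hV₂ : ContDiff ℝ 1 V₂)
    (hV₂0 : V₂ 0 = 0)
    (hV₂pos : ∀ x ∈ D \ {0}, 0 < V₂ x)
    (hdec₂ : ∀ x ∈ D, lieDeriv V₂ f x ≤ 0)
    (hE : ∀ x : EuclideanSpace ℝ (Fin n),
      (∀ t, 0 ≤ t → φ x t ∈ {y ∈ D | lieDeriv V₂ f y = 0}) ↔ x = 0)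
    (γ₃ : ℝ) (hγ₃ : 0 < γ₃)
    (hsub : {y ∈ D | V₂ y ≤ γ₃} ⊆ interior D) :
    {y ∈ D | V₂ y ≤ γ₃} ⊆ {x | Tendsto (fun t => ‖φ x t‖) atTop (𝓝 0)} :=
  lyapunov_sublevel_subset_ROA_general f φ hφ0 hφC hφd hsemi D hD V₂ hV₂ hdec₂ hE γ₃ hsub
end
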